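/- arXiv:1205.6510 — 2 statements merged into one kernel-verified Lean document; each statement's English description precedes it below -/
import Mathlib

section
/- Let G be a finite simple graph, H a finite looped-simple graph with vertex set {1,…,k}, and W a kernel. Define the kernel W^H on ([0,1]^k)² by W^H((x₁,…,x_k),(y₁,…,y_k)) = ∏_{(i,j) ∈ E(H)} W(x_i, y_j), where every non-loop edge of H contributes two factors to the product (once as (i,j) and once as (j,i)). Then t(G × H, W) = t(G, W^H), where G × H is the categorical product. -/
open MeasureTheory

noncomputable section

/-- The unit interval `[0,1]` as a measure space. -/
abbrev UI : Type := Set.Icc (0:ℝ) 1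

/-- A kernel is a symmetric bounded measurable function `[0,1]² → ℝ`. -/
def IsKernel (W : UI → UI → ℝ) : Prop :=
  Measurable (Function.uncurry W) ∧ (∀ x y, W x y = W y x) ∧ ∃ C : ℝ, ∀ x y, |W x y| ≤ C

open scoped Classical in
/-- The homomorphism density of `G` in a kernel over an arbitrary measure space `X`:
`t(G,W) = ∫_{X^V} ∏_{(a,b)∈E} W(p(a),p(b)) dp`. -/
noncomputable def homDensityOn {V : Type} [Fintype V] (G : SimpleGraph V) {X : Type}
    [MeasureSpace X] (W : X → X → ℝ) : ℝ :=
  ∫ p : V → X, ∏ e ∈ G.edgeFinset, W (p (Quot.out e).1) (p (Quot.out e).2)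

/-- The categorical product of a simple graph `G` with a looped-simple graph given by a
symmetric relation `R`. -/
def catProd {V₁ V₂ : Type} (G : SimpleGraph V₁) (R : V₂ → V₂ → Prop) (hR : Symmetric R) :
    SimpleGraph (V₁ × V₂) where
  Adj a b := G.Adj a.1 b.1 ∧ R a.2 b.2
  symm := ⟨fun _ _ hab => ⟨G.adj_symm hab.1, hR hab.2⟩⟩
  loopless := ⟨fun a ha => G.irrefl ha.1⟩


/-!
Currying identifies `V₁ × [k] → [0,1]` with `V₁ → [0,1]^k` measure-preservingly, so both densities
are integrals over the same space. Every edge `{(a,i),(b,j)}` of `G × H` lies over the edge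
`{a,b}` of `G`; once `{a,b}` is oriented as `(a,b)`, the edges over it correspond bijectively to
the ordered pairs `(i,j)` with `R i j`. Since `W` is symmetric, the orientation in which an edge of
`G × H` is read does not matter, so the two integrands agree factor by factor.
-/

theorem measurePreserving_curry (ι κ : Type*) {X : Type*} [Fintype ι] [Fintype κ]
    [MeasurableSpace X] (μ : Measure X) [SigmaFinite μ] :
    MeasurePreserving (MeasurableEquiv.curry ι κ X) (Measure.pi fun _ => μ)
      (Measure.pi fun _ => Measure.pi fun _ => μ) := by
  have h_symm : MeasurePreserving (MeasurableEquiv.curry ι κ X).symm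
      (Measure.pi fun _ => Measure.pi fun _ => μ) (Measure.pi fun _ => μ) := by
    refine ⟨(MeasurableEquiv.curry ι κ X).symm.measurable, (Measure.pi_eq fun s hs => ?_).symm⟩
    have h_preimage : (MeasurableEquiv.curry ι κ X).symm ⁻¹' Set.univ.pi s
        = Set.univ.pi fun i => Set.univ.pi fun j => s (i, j) := by
      ext; simp [MeasurableEquiv.coe_curry_symm, Set.mem_pi, Prod.forall]
    rw [MeasurableEquiv.map_apply, h_preimage, Measure.pi_pi, Fintype.prod_prod_type]
    simp only [Measure.pi_pi]
  simpa using h_symm.symm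

theorem Sym2.lift_eq_out {α β : Type*} (f : { f : α → α → β // ∀ a₁ a₂, f a₁ a₂ = f a₂ a₁ })
    (e : Sym2 α) : Sym2.lift f e = f.1 (Quot.out e).1 (Quot.out e).2 := by
  conv_lhs => rw [← Quot.out_eq e]
  rfl

theorem SimpleGraph.adj_out_of_mem_edgeSet {V : Type*} {G : SimpleGraph V} {e : Sym2 V}
    (he : e ∈ G.edgeSet) : G.Adj (Quot.out e).1 (Quot.out e).2 := by
  rwa [← Quot.out_eq e] at he

section CatProdEdges

variable {V₁ V₂ : Type} {G : SimpleGraph V₁} {R : V₂ → V₂ → Prop}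

/-- `e` is oriented by its representative `Quot.out e`, the orientation `homDensityOn` reads it in. -/
def catProdEdge (e : Sym2 V₁) (q : V₂ × V₂) : Sym2 (V₁ × V₂) :=
  s(((Quot.out e).1, q.1), ((Quot.out e).2, q.2))

theorem catProdEdge_mem_edgeSet (hR : Symmetric R) {e : Sym2 V₁} {q : V₂ × V₂}
    (he : e ∈ G.edgeSet) (hq : R q.1 q.2) : catProdEdge e q ∈ (catProd G R hR).edgeSet :=
  ⟨G.adj_out_of_mem_edgeSet he, hq⟩

theorem catProdEdge_injOn :
    Set.InjOn (Function.uncurry (catProdEdge (V₂ := V₂))) (G.edgeSet ×ˢ Set.univ) := by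
  rintro ⟨e, i, j⟩ ⟨he, -⟩ ⟨e', i', j'⟩ ⟨he', -⟩ h
  simp only [Function.uncurry_apply_pair, catProdEdge, Sym2.eq_iff, Prod.mk.injEq] at h
  rcases h with ⟨⟨ha, hi⟩, hb, hj⟩ | ⟨⟨ha, -⟩, hb, -⟩
  · have he_eq : e = e' := by rw [← Quot.out_eq e, ← Quot.out_eq e', Prod.ext ha hb]
    simp [he_eq, hi, hj]
  · have he_eq : e = e' := by
      rw [← Quot.out_eq e, ← Quot.out_eq e']
      exact Sym2.eq_iff.mpr (Or.inr ⟨ha, hb⟩)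
    subst he_eq
    exact absurd hb.symm (G.adj_out_of_mem_edgeSet he).ne

theorem exists_catProdEdge_eq (hR : Symmetric R) {E : Sym2 (V₁ × V₂)}
    (hE : E ∈ (catProd G R hR).edgeSet) :
    ∃ e ∈ G.edgeSet, ∃ q : V₂ × V₂, R q.1 q.2 ∧ catProdEdge e q = E := by
  obtain ⟨hG, hq⟩ := (catProd G R hR).adj_out_of_mem_edgeSet hE
  set x := (Quot.out E).1
  set y := (Quot.out E).2
  have hE_eq : s(x, y) = E := Quot.out_eq E
  have he : s(x.1, y.1) ∈ G.edgeSet := hG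
  have h_out : s((Quot.out s(x.1, y.1)).1, (Quot.out s(x.1, y.1)).2) = s(x.1, y.1) :=
    Quot.out_eq _
  rcases Sym2.eq_iff.mp h_out with ⟨h1, h2⟩ | ⟨h1, h2⟩
  · exact ⟨_, he, (x.2, y.2), hq, by simp only [catProdEdge, h1, h2, ← hE_eq]⟩
  · exact ⟨_, he, (y.2, x.2), hR hq, by simp only [catProdEdge, h1, h2, ← hE_eq, Sym2.eq_swap]⟩

theorem prod_edgeFinset_catProd {M : Type*} [CommMonoid M] [Fintype V₂] [DecidableRel R]
    (hR : Symmetric R) [Fintype G.edgeSet] [Fintype (catProd G R hR).edgeSet]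
    (g : Sym2 (V₁ × V₂) → M) :
    ∏ E ∈ (catProd G R hR).edgeFinset, g E
      = ∏ e ∈ G.edgeFinset, ∏ q ∈ Finset.univ.filter (fun q : V₂ × V₂ => R q.1 q.2),
          g (catProdEdge e q) := by
  rw [← Finset.prod_product']
  refine (Finset.prod_nbij (Function.uncurry catProdEdge) ?_ ?_ ?_ fun _ _ => rfl).symm
  · rintro ⟨e, q⟩ h
    simp only [Finset.mem_product, SimpleGraph.mem_edgeFinset, Finset.mem_filter,
      Finset.mem_univ, true_and] at h
    exact SimpleGraph.mem_edgeFinset.mpr (catProdEdge_mem_edgeSet hR h.1 h.2)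
  · exact (catProdEdge_injOn (G := G)).mono fun x hx => by simp_all
  · intro E hE
    obtain ⟨e, he, q, hq, rfl⟩ := exists_catProdEdge_eq hR (SimpleGraph.mem_edgeFinset.mp hE)
    exact ⟨(e, q), by simp [he, hq], rfl⟩

end CatProdEdges

open scoped Classical in
theorem homDensityOn_catProd {V₁ V₂ X : Type} [Fintype V₁] [Fintype V₂] [MeasureSpace X]
    [SigmaFinite (volume : Measure X)] (G : SimpleGraph V₁) (R : V₂ → V₂ → Prop)
    (hR : Symmetric R) (W : X → X → ℝ) (hW : ∀ x y, W x y = W y x) :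
    homDensityOn (catProd G R hR) W
      = homDensityOn G fun x y : V₂ → X =>
          ∏ q ∈ Finset.univ.filter (fun q : V₂ × V₂ => R q.1 q.2), W (x q.1) (y q.2) := by
  let F (p : V₁ → V₂ → X) : ℝ :=
    ∏ e ∈ G.edgeFinset, ∏ q ∈ Finset.univ.filter (fun q : V₂ × V₂ => R q.1 q.2),
      W (p (Quot.out e).1 q.1) (p (Quot.out e).2 q.2)
  have h_integrand (p : V₁ × V₂ → X) :
      ∏ E ∈ (catProd G R hR).edgeFinset, W (p (Quot.out E).1) (p (Quot.out E).2)
        = F (MeasurableEquiv.curry V₁ V₂ X p) := by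
    rw [Finset.prod_congr rfl fun E _ =>
        (Sym2.lift_eq_out ⟨fun a b => W (p a) (p b), fun _ _ => hW _ _⟩ E).symm,
      prod_edgeFinset_catProd hR]
    rfl
  exact (integral_congr_ae (ae_of_all _ h_integrand)).trans
    ((measurePreserving_curry V₁ V₂ volume).integral_comp' F)

open scoped Classical in
/-- `t(G × H, W) = t(G, W^H)`, where `H` is a looped-simple graph on `{1,…,k}` given by a
symmetric relation `R`, and `W^H((x₁,…,x_k),(y₁,…,y_k)) = ∏_{(i,j) ∈ E(H)} W(xᵢ, yⱼ)`
(each non-loop edge of `H` contributing two factors, once as `(i,j)` and once as `(j,i)`). -/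
theorem homDensity_catProd {V₁ : Type} [Fintype V₁] (G : SimpleGraph V₁) (k : ℕ)
    (R : Fin k → Fin k → Prop) (hR : Symmetric R)
    (W : UI → UI → ℝ) (hW : IsKernel W)
    (WH : (Fin k → UI) → (Fin k → UI) → ℝ)
    (hWH : ∀ x y, WH x y =
      ∏ q ∈ Finset.univ.filter (fun q : Fin k × Fin k => R q.1 q.2), W (x q.1) (y q.2)) :
    homDensityOn (catProd G R hR) W = homDensityOn G WH := by
  obtain rfl : WH = _ := funext₂ hWH
  exact homDensityOn_catProd G R hR W hW.2.1
end
end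

section
/- Let G be a finite simple graph and let G² denote the disjoint union of two copies of G. Then p(G²) = r̄(G²), where p and r̄ are computed with target K_n for any sufficiently large n (say n ≥ 4|V(G)|). -/
open MeasureTheory

noncomputable section

open scoped Classical in
/-- A graph homomorphism `f : G → H` is even if for every edge `e` of `H`, the number of
edges of `G` mapped by `f` onto `e` is even. -/
def IsEvenHom {V V' : Type} [Fintype V] [Fintype V'] {G : SimpleGraph V} {H : SimpleGraph V'}
    (f : G →g H) : Prop :=
  ∀ e ∈ H.edgeFinset, Even ((G.edgeFinset.filter (fun e' => Sym2.map (⇑f) e' = e)).card)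

open scoped Classical in
/-- The set of `f`-odd vertices of `K_n`: those incident with an edge having an odd number
of preimage edges under `f`. -/
noncomputable def oddVerts {V : Type} [Fintype V] {G : SimpleGraph V} {n : ℕ}
    (f : G →g (⊤ : SimpleGraph (Fin n))) : Finset (Fin n) :=
  Finset.univ.filter (fun v => ∃ e ∈ (⊤ : SimpleGraph (Fin n)).edgeFinset,
    Odd ((G.edgeFinset.filter (fun e' => Sym2.map (⇑f) e' = e)).card) ∧ v ∈ e)

open scoped Classical in
/-- `r(f) = |V(G)| − |f(V(G))| + |V_odd(f)|/2`. -/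
noncomputable def rval {V : Type} [Fintype V] {G : SimpleGraph V} {n : ℕ}
    (f : G →g (⊤ : SimpleGraph (Fin n))) : ℝ :=
  (Fintype.card V : ℝ) - ((Finset.univ.image ⇑f).card : ℝ) + ((oddVerts f).card : ℝ) / 2

/-- `r̄(G) = min { r(f) : f : G → K_n }`. -/
noncomputable def rbar {V : Type} [Fintype V] (G : SimpleGraph V) (n : ℕ) : ℝ :=
  sInf {x : ℝ | ∃ f : G →g (⊤ : SimpleGraph (Fin n)), rval f = x}

open scoped Classical in
/-- `p(G) = min { |V(G)| − |f(V(G))| : f : G → K_n even }`. -/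
noncomputable def pval {V : Type} [Fintype V] (G : SimpleGraph V) (n : ℕ) : ℝ :=
  sInf {x : ℝ | ∃ f : G →g (⊤ : SimpleGraph (Fin n)), IsEvenHom f ∧
    (Fintype.card V : ℝ) - ((Finset.univ.image ⇑f).card : ℝ) = x}

/-- The disjoint union of `k` copies of `G`. -/
def copies {V : Type} (G : SimpleGraph V) (k : ℕ) : SimpleGraph (Fin k × V) where
  Adj a b := a.1 = b.1 ∧ G.Adj a.2 b.2
  symm := ⟨fun _ _ hab => ⟨hab.1.symm, G.adj_symm hab.2⟩⟩
  loopless := ⟨fun a ha => G.irrefl ha.2⟩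

/-!
Write `f₀, f₁` for the restrictions of `f : G² → K_n` to the two copies of `G`, `Aᵢ` for their
images and `Sᵢ` for their sets of odd vertices. An edge that is odd for exactly one `fᵢ` is odd
for `f`, so `|S₀| + |S₁| ≤ 2|S₀ ∩ S₁| + |V_odd(f)| ≤ 2|A₀ ∩ A₁| + |V_odd(f)|`, and hence
`2|f(V)| + |S₀| + |S₁| ≤ 2|A₀| + 2|A₁| + |V_odd(f)|`.

Conversely, any `h : G → K_n` yields an even homomorphism of `G²` with image of size
`2|h(V)| - |S(h)|`: map the first copy by `h` and the second by `π ∘ h`, where the permutation `π`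
fixes the odd vertices of `h` and moves the other vertices of `h(V)` out of `h(V)` (there is room
since `n ≥ 2|V|`). The edge multiplicities of `π ∘ h` are those of `h` transported by `π`, and `π`
fixes every odd edge of `h`, so all multiplicities of the combined map are even. Averaging this
construction over `f₀` and `f₁` gives `p(G²) ≤ r(f)`; the reverse inequality holds because an even
homomorphism has no odd vertices.
-/

open Finset

namespace Finset

variable {β : Type*} [DecidableEq β]

theorem exists_perm_fix_mapsTo_compl [Fintype β] {S A : Finset β} (hSA : S ⊆ A)
    (hcard : #A + #(A \ S) ≤ Fintype.card β) :
    ∃ π : Equiv.Perm β, (∀ x ∈ S, π x = x) ∧ ∀ x ∈ A \ S, π x ∉ A := by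
  obtain ⟨ι⟩ : Nonempty (↥(A \ S) ↪ ↥Aᶜ) := Function.Embedding.nonempty_of_card_le (by
    simp only [Fintype.card_coe, card_compl]
    omega)
  let σ (x : β) : β := if hx : x ∈ A \ S then ι ⟨x, hx⟩ else x
  have hσ_out (x) (hx : x ∈ A \ S) : σ x ∉ A := by
    rw [show σ x = ι ⟨x, hx⟩ from dif_pos hx]
    exact mem_compl.mp (ι ⟨x, hx⟩).2
  have hσ_fix (x) (hx : x ∉ A \ S) : σ x = x := dif_neg hx
  have hσ_inj : Set.InjOn σ A := by
    intro x hx y hy hxy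
    by_cases hxT : x ∈ A \ S <;> by_cases hyT : y ∈ A \ S
    · rw [show σ x = ι ⟨x, hxT⟩ from dif_pos hxT, show σ y = ι ⟨y, hyT⟩ from dif_pos hyT] at hxy
      exact congrArg Subtype.val (ι.injective (Subtype.ext hxy))
    · exact absurd (hxy.trans (hσ_fix y hyT) ▸ hy) (hσ_out x hxT)
    · exact absurd (hxy.symm.trans (hσ_fix x hxT) ▸ hx) (hσ_out y hyT)
    · rwa [hσ_fix x hxT, hσ_fix y hyT] at hxy
  obtain ⟨π, hπ⟩ := exists_equiv_extend_of_card_eq (t := univ) (card_univ.symm)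
    (subset_univ _) hσ_inj
  refine ⟨π.trans (Equiv.subtypeUnivEquiv mem_univ), fun x hx => ?_, fun x hx => ?_⟩
  · simp [hπ x (hSA hx), hσ_fix x (fun h => (mem_sdiff.mp h).2 hx)]
  · simpa [hπ x (mem_sdiff.mp hx).1] using hσ_out x hx

theorem card_union_image_perm_add_card {S A : Finset β} (hSA : S ⊆ A) (π : Equiv.Perm β)
    (hfix : ∀ x ∈ S, π x = x) (hout : ∀ x ∈ A \ S, π x ∉ A) :
    #(A ∪ A.image π) + #S = 2 * #A := by
  have himage : A.image π = (A \ S).image π ∪ S := by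
    conv_lhs => rw [← sdiff_union_of_subset hSA]
    rw [image_union, image_congr (g := id) hfix, image_id]
  have hdisj : Disjoint A ((A \ S).image π) := by
    rw [disjoint_right]
    rintro _ hy
    obtain ⟨x, hx, rfl⟩ := mem_image.mp hy
    exact hout x hx
  rw [himage, union_comm _ S, ← union_assoc, union_eq_left.mpr hSA,
    card_union_of_disjoint hdisj, card_image_of_injective _ π.injective]
  have := card_sdiff_add_card_eq_card hSA
  omega

theorem image_univ_prod_fin_two {V : Type*} [Fintype V] (F : Fin 2 × V → β) :
    univ.image F = univ.image (F ∘ Prod.mk 0) ∪ univ.image (F ∘ Prod.mk 1) := by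
  ext x
  simp [Fin.exists_fin_two]

end Finset

namespace SimpleGraph

section FiberCard

variable {V β γ : Type*} [Fintype V] (G : SimpleGraph V)

open scoped Classical in
def edgeFiberCard (F : V → β) (e : Sym2 β) : ℕ :=
  #{e' ∈ G.edgeFinset | Sym2.map F e' = e}

open scoped Classical in
def oddVertices [Fintype β] (c : Sym2 β → ℕ) : Finset β :=
  univ.filter fun v => ∃ e, Odd (c e) ∧ v ∈ e

variable {G}

theorem mem_oddVertices [Fintype β] {c : Sym2 β → ℕ} {v : β} :
    v ∈ oddVertices c ↔ ∃ e, Odd (c e) ∧ v ∈ e := by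
  simp [oddVertices]

theorem oddVertices_sdiff_subset [Fintype β] [DecidableEq β] (c₀ c₁ : Sym2 β → ℕ) :
    oddVertices c₀ \ oddVertices c₁ ⊆ oddVertices (c₀ + c₁) := by
  intro v hv
  obtain ⟨hv₀, hv₁⟩ := mem_sdiff.mp hv
  obtain ⟨e, he, hve⟩ := mem_oddVertices.mp hv₀
  have : Even (c₁ e) := Nat.not_odd_iff_even.mp fun h => hv₁ (mem_oddVertices.mpr ⟨e, h, hve⟩)
  exact mem_oddVertices.mpr ⟨e, he.add_even this, hve⟩

theorem card_oddVertices_add_card_le [Fintype β] [DecidableEq β] (c₀ c₁ : Sym2 β → ℕ) :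
    #(oddVertices c₀) + #(oddVertices c₁) ≤
      2 * #(oddVertices c₀ ∩ oddVertices c₁) + #(oddVertices (c₀ + c₁)) := by
  set S₀ := oddVertices c₀
  set S₁ := oddVertices c₁
  have hsub : S₀ ∪ S₁ ⊆ (S₀ ∩ S₁) ∪ oddVertices (c₀ + c₁) := by
    intro v hv
    by_cases h : v ∈ S₀ ∩ S₁
    · exact mem_union_left _ h
    refine mem_union_right _ ?_
    rcases mem_union.mp hv with hv | hv
    · refine oddVertices_sdiff_subset c₀ c₁ (mem_sdiff.mpr ⟨hv, fun h' => h ?_⟩)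
      exact mem_inter.mpr ⟨hv, h'⟩
    · rw [add_comm]
      refine oddVertices_sdiff_subset c₁ c₀ (mem_sdiff.mpr ⟨hv, fun h' => h ?_⟩)
      exact mem_inter.mpr ⟨h', hv⟩
  have := (card_le_card hsub).trans (card_union_le _ _)
  have := card_union_add_card_inter S₀ S₁
  omega

open scoped Classical in
theorem exists_map_eq_of_edgeFiberCard_ne_zero {F : V → β} {e : Sym2 β}
    (h : edgeFiberCard G F e ≠ 0) : ∃ t ∈ G.edgeFinset, Sym2.map F t = e := by
  obtain ⟨t, ht⟩ := card_ne_zero.mp h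
  exact ⟨t, (mem_filter.mp ht).1, (mem_filter.mp ht).2⟩

theorem oddVertices_edgeFiberCard_subset_image [Fintype β] [DecidableEq β] (F : V → β) :
    oddVertices (edgeFiberCard G F) ⊆ univ.image F := by
  intro v hv
  obtain ⟨e, he, hve⟩ := mem_oddVertices.mp hv
  obtain ⟨t, -, rfl⟩ := exists_map_eq_of_edgeFiberCard_ne_zero he.pos.ne'
  obtain ⟨u, -, rfl⟩ := Sym2.mem_map.mp hve
  exact mem_image_of_mem F (mem_univ u)

theorem edgeFiberCard_comp_equiv (π : β ≃ γ) (F : V → β) (e : Sym2 β) :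
    edgeFiberCard G (π ∘ F) (e.map π) = edgeFiberCard G F e := by
  classical
  unfold edgeFiberCard
  congr 1
  refine filter_congr fun t _ => ?_
  rw [← Sym2.map_map, (Sym2.map.injective π.injective).eq_iff]

end FiberCard

section Copies

variable {β : Type*} {W : Type} [Fintype W] (G : SimpleGraph W)

def copiesIncl {k : ℕ} (i : Fin k) : G →g copies G k := ⟨Prod.mk i, fun h => ⟨rfl, h⟩⟩

variable {G} in
def copiesLift {H : SimpleGraph β} {k : ℕ} (f : Fin k → G →g H) : copies G k →g H where
  toFun p := f p.1 p.2
  map_rel' := by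
    rintro ⟨i, u⟩ ⟨j, v⟩ ⟨hij, huv⟩
    obtain rfl : i = j := hij
    exact (f i).map_rel huv

open scoped Classical in
theorem edgeFiberCard_copies {k : ℕ} (F : Fin k × W → β) (e : Sym2 β) :
    edgeFiberCard (copies G k) F e = ∑ i, edgeFiberCard G (F ∘ Prod.mk i) e := by
  let emb (i : Fin k) : Sym2 W ↪ Sym2 (Fin k × W) :=
    ⟨Sym2.map (Prod.mk i), Sym2.map.injective (Prod.mk_right_injective i)⟩
  have hsplit : {e' ∈ (copies G k).edgeFinset | Sym2.map F e' = e} =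
      univ.biUnion fun i => {t ∈ G.edgeFinset | Sym2.map (F ∘ Prod.mk i) t = e}.map (emb i) := by
    ext s
    simp only [mem_filter, mem_biUnion, mem_map, mem_univ, true_and, mem_edgeFinset]
    constructor
    · rintro ⟨hs, rfl⟩
      induction s with
      | _ a b =>
        obtain ⟨i, u⟩ := a
        obtain ⟨j, v⟩ := b
        obtain ⟨rfl : i = j, huv⟩ := hs
        exact ⟨i, s(u, v), ⟨huv, rfl⟩, rfl⟩
    · rintro ⟨i, t, ⟨ht, rfl⟩, rfl⟩
      exact ⟨((copiesIncl G i).mapEdgeSet ⟨t, ht⟩).2, Sym2.map_map _⟩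
  have hdisj : ((univ : Finset (Fin k)) : Set (Fin k)).PairwiseDisjoint
      fun i => {t ∈ G.edgeFinset | Sym2.map (F ∘ Prod.mk i) t = e}.map (emb i) := by
    intro i _ j _ hij
    rw [Function.onFun, Finset.disjoint_left]
    simp only [mem_map]
    rintro _ ⟨t, -, rfl⟩ ⟨t', -, ht'⟩
    induction t with
    | _ x y =>
      have hmem : (i, x) ∈ emb j t' := ht' ▸ Sym2.mem_mk_left _ (i, y)
      obtain ⟨w, -, hw⟩ := Sym2.mem_map.mp hmem
      exact hij (congrArg Prod.fst hw).symm
  rw [edgeFiberCard, hsplit, card_biUnion hdisj]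
  simp only [card_map, edgeFiberCard]

variable {G}

theorem edgeFiberCard_copies_two (F : Fin 2 × W → β) :
    edgeFiberCard (copies G 2) F =
      edgeFiberCard G (F ∘ Prod.mk 0) + edgeFiberCard G (F ∘ Prod.mk 1) := by
  funext e
  rw [edgeFiberCard_copies, Fin.sum_univ_two, Pi.add_apply]

theorem card_image_add_card_oddVertices_le [Fintype β] [DecidableEq β] (F : Fin 2 × W → β) :
    2 * #(univ.image F) + #(oddVertices (edgeFiberCard G (F ∘ Prod.mk 0))) +
        #(oddVertices (edgeFiberCard G (F ∘ Prod.mk 1))) ≤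
      2 * #(univ.image (F ∘ Prod.mk 0)) + 2 * #(univ.image (F ∘ Prod.mk 1)) +
        #(oddVertices (edgeFiberCard (copies G 2) F)) := by
  have himage :=
    card_union_add_card_inter (univ.image (F ∘ Prod.mk 0)) (univ.image (F ∘ Prod.mk 1))
  rw [← image_univ_prod_fin_two] at himage
  have hodd := card_oddVertices_add_card_le (edgeFiberCard G (F ∘ Prod.mk 0))
    (edgeFiberCard G (F ∘ Prod.mk 1))
  rw [← edgeFiberCard_copies_two] at hodd
  have hinter := card_le_card (inter_subset_inter (oddVertices_edgeFiberCard_subset_image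
    (G := G) (F ∘ Prod.mk 0)) (oddVertices_edgeFiberCard_subset_image (G := G) (F ∘ Prod.mk 1)))
  omega

theorem even_edgeFiberCard_add_comp_perm [Fintype β] [DecidableEq β] (F : W → β)
    (π : Equiv.Perm β) (hπ : ∀ x ∈ oddVertices (edgeFiberCard G F), π x = x) (e : Sym2 β) :
    Even (edgeFiberCard G F e + edgeFiberCard G (π ∘ F) e) := by
  have hfix (d : Sym2 β) (hd : Odd (edgeFiberCard G F d)) : d.map π = d :=
    (Sym2.map_congr fun x hx => hπ x (mem_oddVertices.mpr ⟨d, hd, hx⟩)).trans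
      (congrFun Sym2.map_id' d)
  obtain ⟨d, rfl⟩ : ∃ d, d.map π = e := ⟨e.map π.symm, by simp [Sym2.map_map]⟩
  rw [edgeFiberCard_comp_equiv, Nat.even_add]
  by_cases hd : d.map π = d
  · rw [hd]
  have hd_even : Even (edgeFiberCard G F d) := by
    by_contra h
    exact hd (hfix d (Nat.not_even_iff_odd.mp h))
  have hπd_even : Even (edgeFiberCard G F (d.map π)) := by
    by_contra h
    exact hd (Sym2.map.injective π.injective (hfix _ (Nat.not_even_iff_odd.mp h)))
  exact iff_of_true hπd_even hd_even

theorem exists_hom_copies_two_even [Fintype β] [DecidableEq β] (h : G →g (⊤ : SimpleGraph β))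
    (hcard : 2 * Fintype.card W ≤ Fintype.card β) :
    ∃ g : copies G 2 →g (⊤ : SimpleGraph β), (∀ e, Even (edgeFiberCard (copies G 2) g e)) ∧
      #(univ.image g) + #(oddVertices (edgeFiberCard G h)) = 2 * #(univ.image h) := by
  set A := univ.image h
  set S := oddVertices (edgeFiberCard G h)
  have hSA : S ⊆ A := oddVertices_edgeFiberCard_subset_image h
  have hA : #A ≤ Fintype.card W := card_image_le.trans_eq card_univ
  have hAS : #(A \ S) ≤ #A := card_le_card sdiff_subset
  obtain ⟨π, hπS, hπA⟩ := exists_perm_fix_mapsTo_compl hSA (by omega)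
  let g := copiesLift ![h, (Iso.completeGraph π).toHom.comp h]
  have hg₀ : ⇑g ∘ Prod.mk 0 = h := rfl
  have hg₁ : ⇑g ∘ Prod.mk 1 = π ∘ h := rfl
  refine ⟨g, fun e => ?_, ?_⟩
  · rw [edgeFiberCard_copies_two, Pi.add_apply, hg₀, hg₁]
    exact even_edgeFiberCard_add_comp_perm h π hπS e
  · rw [image_univ_prod_fin_two, hg₀, hg₁, ← image_image]
    exact card_union_image_perm_add_card hSA π hπS hπA

end Copies

end SimpleGraph

section

open SimpleGraph

variable {V : Type} [Fintype V] {G : SimpleGraph V} {n : ℕ}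

theorem isEvenHom_of_forall_even {f : G →g (⊤ : SimpleGraph (Fin n))}
    (hf : ∀ e, Even (edgeFiberCard G f e)) : IsEvenHom f := fun e _ => by
  unfold edgeFiberCard at hf
  convert hf e

theorem oddVerts_eq_oddVertices (f : G →g (⊤ : SimpleGraph (Fin n))) :
    oddVerts f = oddVertices (edgeFiberCard G f) := by
  classical
  ext v
  simp only [oddVerts, mem_oddVertices, mem_filter, mem_univ, true_and]
  constructor
  · rintro ⟨e, -, he, hv⟩
    exact ⟨e, by unfold edgeFiberCard; convert he, hv⟩
  · rintro ⟨e, he, hv⟩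
    obtain ⟨t, ht, rfl⟩ := exists_map_eq_of_edgeFiberCard_ne_zero he.pos.ne'
    refine ⟨Sym2.map f t, mem_edgeFinset.mpr (f.mapEdgeSet ⟨t, mem_edgeFinset.mp ht⟩).2, ?_, hv⟩
    unfold edgeFiberCard at he
    convert he

theorem oddVerts_eq_empty_of_isEvenHom {f : G →g (⊤ : SimpleGraph (Fin n))} (hf : IsEvenHom f) :
    oddVerts f = ∅ :=
  filter_eq_empty_iff.mpr fun _ _ ⟨e, he, hodd, _⟩ =>
    Nat.not_even_iff_odd.mpr hodd (by convert hf e (by convert he))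

theorem rval_nonneg (f : G →g (⊤ : SimpleGraph (Fin n))) : 0 ≤ rval f := by
  have : (#(univ.image f) : ℝ) ≤ Fintype.card V := by
    exact_mod_cast card_image_le.trans_eq card_univ
  unfold rval
  positivity

theorem pval_le_of_isEvenHom {f : G →g (⊤ : SimpleGraph (Fin n))} (hf : IsEvenHom f) :
    pval G n ≤ Fintype.card V - #(univ.image f) := by
  refine csInf_le ⟨0, ?_⟩ ⟨f, hf, rfl⟩
  rintro _ ⟨g, -, rfl⟩
  exact sub_nonneg.mpr (by exact_mod_cast card_image_le.trans_eq card_univ)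

theorem rbar_le_pval (h : ∃ f : G →g (⊤ : SimpleGraph (Fin n)), IsEvenHom f) :
    rbar G n ≤ pval G n := by
  obtain ⟨f, hf⟩ := h
  refine csInf_le_csInf ⟨0, ?_⟩ ⟨_, f, hf, rfl⟩ ?_
  · rintro _ ⟨g, rfl⟩
    exact rval_nonneg g
  · rintro _ ⟨g, hg, rfl⟩
    exact ⟨g, by simp [rval, oddVerts_eq_empty_of_isEvenHom hg]⟩

theorem pval_copies_two_le_rval (hn : 2 * Fintype.card V ≤ Fintype.card (Fin n))
    (f : copies G 2 →g (⊤ : SimpleGraph (Fin n))) : pval (copies G 2) n ≤ rval f := by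
  have hcopy (i : Fin 2) : pval (copies G 2) n + 2 * (#(univ.image (f ∘ Prod.mk i)) : ℝ) ≤
      2 * Fintype.card V + #(oddVertices (edgeFiberCard G (f ∘ Prod.mk i))) := by
    obtain ⟨g, hg, hcard⟩ := exists_hom_copies_two_even (f.comp (copiesIncl G i)) hn
    have hp := pval_le_of_isEvenHom (isEvenHom_of_forall_even hg)
    have hcard' : (#(univ.image g) : ℝ) + #(oddVertices (edgeFiberCard G (f ∘ Prod.mk i))) =
        2 * #(univ.image (f ∘ Prod.mk i)) := by exact_mod_cast hcard
    rw [Fintype.card_prod, Fintype.card_fin] at hp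
    push_cast at hp
    linarith
  have hineq : (2 * #(univ.image f) + #(oddVertices (edgeFiberCard G (f ∘ Prod.mk 0))) +
        #(oddVertices (edgeFiberCard G (f ∘ Prod.mk 1))) : ℝ) ≤
      2 * #(univ.image (f ∘ Prod.mk 0)) + 2 * #(univ.image (f ∘ Prod.mk 1)) +
        #(oddVertices (edgeFiberCard (copies G 2) f)) := by
    exact_mod_cast card_image_add_card_oddVertices_le f
  rw [rval, oddVerts_eq_oddVertices, Fintype.card_prod, Fintype.card_fin]
  push_cast
  linarith [hcopy 0, hcopy 1]

end

/-- `p(G²) = r̄(G²)` for the disjoint union `G²` of two copies of `G`, for all sufficiently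
large target complete graphs `K_n` (say `n ≥ 4|V(G)|`). -/
theorem pval_copies_two {V : Type} [Fintype V] (G : SimpleGraph V) :
    ∀ n : ℕ, 4 * Fintype.card V ≤ n →
      pval (copies G 2) n = rbar (copies G 2) n := by
  intro n hn
  have hcard : 2 * Fintype.card V ≤ Fintype.card (Fin n) := by
    rw [Fintype.card_fin]
    omega
  obtain ⟨h⟩ := G.colorable_of_fintype.mono (by omega : Fintype.card V ≤ n)
  obtain ⟨g, hg, -⟩ := SimpleGraph.exists_hom_copies_two_even h hcard
  refine le_antisymm (le_csInf ⟨_, g, rfl⟩ ?_) (rbar_le_pval ⟨g, isEvenHom_of_forall_even hg⟩)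
  rintro _ ⟨f, rfl⟩
  exact pval_copies_two_le_rval hcard f
end
end
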